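/- Let ⋆ be a normalized symmetric composition on (S,n) and let α_⋆ : C(S,n) → End_F(S ⊕ S) be the algebra map induced from x ↦ ((u,v) ↦ (r_x(v), ℓ_x(u))). Let c be an invertible element of the even Clifford subalgebra C_0(S,n) such that c·σ(c) = 1, where σ is the canonical involution (reversal) of C(S,n), and such that c·ι(x)·c^{−1} ∈ ι(S) for all x ∈ S, where ι : S → C(S,n) is the canonical embedding. Define f : S → S by ι(f(x)) = c·ι(x)·c^{−1}, and let f₁, f₂ ∈ End_F(S) be the diagonal blocks of α_⋆(c), i.e., α_⋆(c)(u,v) = (f₁(u), f₂(v)). Then f, f₁, f₂ are isometries of (S,n) and f(x⋆y) = f₁(x) ⋆ f₂(y), f₁(x⋆y) = f₂(x) ⋆ f(y), and f₂(x⋆y) = f(x) ⋆ f₁(y) for all x,y ∈ S. -/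

import Mathlib

/-!
Conjugation by `c` preserves the scalars `ι(x)² = n(x)`, so `f` is an isometry. In `α_⋆` the
reversal becomes the adjoint for `n ⊥ n` (this is the associativity `b_n(x⋆y, z) = b_n(x, y⋆z)`),
so `α_⋆(c)` with `σ(c) = c⁻¹` preserves `b_n ⊥ b_n`; its blocks `f₁, f₂` preserve `b_n`.
Applying `α_⋆` to `c ι(x) = ι(f x) c` gives two triality relations, and the third follows from
them by nondegeneracy. Then `n(f₁ x) n(f₂ y) = n(x) n(y)` forces `n ∘ f₂ = μ n`, and `f₂`
preserving `b_n` forces `μ = 1`; this detour is needed because in characteristic 2 the polar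
form does not determine `n`.
-/

open CliffordAlgebra QuadraticMap

theorem CliffordAlgebra.algebraMap_eq_of_mul_ι_eq_ι_mul {R M : Type*} [CommRing R]
    [AddCommGroup M] [Module R M] {Q : QuadraticForm R M} {c d : CliffordAlgebra Q}
    (hcd : c * d = 1) {x y : M} (h : c * ι Q x = ι Q y * c) :
    algebraMap R (CliffordAlgebra Q) (Q y) = algebraMap R _ (Q x) := by
  have hc : algebraMap R (CliffordAlgebra Q) (Q y) * c = algebraMap R _ (Q x) * c := by
    calc algebraMap R (CliffordAlgebra Q) (Q y) * c = ι Q y * (ι Q y * c) := by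
          rw [← mul_assoc, ι_sq_scalar]
      _ = c * (ι Q x * ι Q x) := by rw [← h, ← mul_assoc, ← h, mul_assoc]
      _ = algebraMap R _ (Q x) * c := by rw [ι_sq_scalar, Algebra.commutes]
  simpa only [mul_assoc, hcd, mul_one] using congrArg (· * d) hc

namespace QuadraticMap

variable {F S : Type*} [Field F] [AddCommGroup S] [Module F S] {n : QuadraticForm F S}

theorem apply_eq_of_mul_ι_eq_ι_mul (α : CliffordAlgebra n →ₐ[F] Module.End F (S × S))
    {c d : CliffordAlgebra n} (hcd : c * d = 1) {x y : S} (h : c * ι n x = ι n y * c) :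
    n y = n x := by
  rcases subsingleton_or_nontrivial S with _ | _
  · rw [Subsingleton.elim y x]
  · have := α.toRingHom.domain_nontrivial
    exact (algebraMap F _).injective (algebraMap_eq_of_mul_ι_eq_ι_mul hcd h)

theorem polar_map_map {g : S →ₗ[F] S} (hg : ∀ x, n (g x) = n x) (x y : S) :
    polar n (g x) (g y) = polar n x y := by
  simp only [polar, ← map_add, hg]

theorem eq_of_forall_polar_eq (hnd : ∀ x : S, (∀ y : S, polar n x y = 0) → x = 0)
    {a b : S} (h : ∀ z, polar n a z = polar n b z) : a = b :=
  sub_eq_zero.mp <| hnd _ fun z => by rw [polar_sub_left, h, sub_self]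

theorem bijective_of_polar_map_map [FiniteDimensional F S]
    (hnd : ∀ x : S, (∀ y : S, polar n x y = 0) → x = 0) {g : S →ₗ[F] S}
    (hg : ∀ x y, polar n (g x) (g y) = polar n x y) : Function.Bijective g := by
  have hinj : Function.Injective g := by
    refine (injective_iff_map_eq_zero g).mpr fun x hx => hnd x fun y => ?_
    rw [← hg, hx, polar_zero_left]
  exact ⟨hinj, LinearMap.injective_iff_surjective.mp hinj⟩

theorem apply_map_eq_of_mul_apply_map_eq
    (hnd : ∀ x : S, (∀ y : S, polar n x y = 0) → x = 0) {g h : S →ₗ[F] S}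
    (hh : ∀ x y, polar n (h x) (h y) = polar n x y)
    (hgh : ∀ x y, n (g x) * n (h y) = n x * n y) :
    (∀ x, n (g x) = n x) ∧ (∀ x, n (h x) = n x) := by
  by_cases hzero : ∀ x, n x = 0
  · exact ⟨fun x => by rw [hzero, hzero], fun x => by rw [hzero, hzero]⟩
  obtain ⟨x₀, hx₀⟩ := not_forall.mp hzero
  have hgx₀ : n (g x₀) ≠ 0 := fun h0 => mul_ne_zero hx₀ hx₀ (by rw [← hgh, h0, zero_mul])
  set μ := n x₀ / n (g x₀)
  have hμ : ∀ y, n (h y) = μ * n y := fun y => by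
    rw [div_mul_eq_mul_div, ← hgh, eq_div_iff hgx₀, mul_comm]
  have hμ1 : μ = 1 := by
    obtain ⟨y, hy⟩ : ∃ y, polar n x₀ y ≠ 0 := by
      by_contra! hy
      exact hx₀ (by rw [hnd x₀ hy, map_zero])
    have : polar n (h x₀) (h y) = μ * polar n x₀ y := by
      simp only [polar, ← map_add, hμ]; ring
    rw [hh, eq_comm] at this
    exact mul_left_eq_self₀.mp this |>.resolve_right hy
  have hnh : ∀ y, n (h y) = n y := fun y => by rw [hμ, hμ1, one_mul]
  refine ⟨fun x => mul_right_cancel₀ hx₀ ?_, hnh⟩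
  simpa only [hnh] using hgh x x₀

theorem polar_map_map_of_blocks {T : Module.End F (S × S)} {f₁ f₂ : Module.End F S}
    (hT : ∀ w w', polar (n.prod n) (T w) (T w') = polar (n.prod n) w w')
    (hblocks : ∀ w, T w = (f₁ w.1, f₂ w.2)) :
    (∀ x y, polar n (f₁ x) (f₁ y) = polar n x y) ∧ (∀ x y, polar n (f₂ x) (f₂ y) = polar n x y) :=
  ⟨fun x y => by simpa [hblocks] using hT (x, 0) (y, 0),
    fun x y => by simpa [hblocks] using hT (0, x) (0, y)⟩

section SymmetricComposition

variable {star : S →ₗ[F] S →ₗ[F] S} {α : CliffordAlgebra n →ₐ[F] Module.End F (S × S)}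

theorem polar_prod_α_apply_reverse
    (hassoc : ∀ x y z : S, polar n (star x y) z = polar n x (star y z))
    (hα : ∀ (x : S) (w : S × S), α (ι n x) w = (star w.2 x, star x w.1))
    (a : CliffordAlgebra n) (w w' : S × S) :
    polar (n.prod n) (α a w) w' = polar (n.prod n) w (α (reverse a) w') := by
  induction a using CliffordAlgebra.induction generalizing w w' with
  | algebraMap r =>
    simp only [reverse.commutes, AlgHom.commutes, Module.algebraMap_end_apply, polar_smul_left,
      polar_smul_right]
  | ι x =>
    simp only [reverse_ι, hα, polar_prod]
    have h₂ : polar n (star x w.1) w'.2 = polar n w.1 (star w'.2 x) := by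
      rw [polar_comm, ← hassoc, polar_comm]
    linear_combination hassoc w.2 x w'.1 + h₂
  | mul a b ha hb =>
    rw [reverse.map_mul, map_mul, map_mul, Module.End.mul_apply, Module.End.mul_apply, ha, hb]
  | add a b ha hb =>
    simp only [map_add, LinearMap.add_apply, polar_add_left, polar_add_right, ha, hb]

theorem polar_prod_α_apply_α_apply
    (hassoc : ∀ x y z : S, polar n (star x y) z = polar n x (star y z))
    (hα : ∀ (x : S) (w : S × S), α (ι n x) w = (star w.2 x, star x w.1))
    {c : CliffordAlgebra n} (hc : reverse c * c = 1) (w w' : S × S) :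
    polar (n.prod n) (α c w) (α c w') = polar (n.prod n) w w' := by
  rw [polar_prod_α_apply_reverse hassoc hα, ← Module.End.mul_apply, ← map_mul, hc, map_one,
    Module.End.one_apply]

theorem star_triality_of_blocks
    (hα : ∀ (x : S) (w : S × S), α (ι n x) w = (star w.2 x, star x w.1))
    {c : CliffordAlgebra n} {f : S → S} (hf : ∀ x, c * ι n x = ι n (f x) * c)
    {f₁ f₂ : Module.End F S} (hblocks : ∀ w : S × S, α c w = (f₁ w.1, f₂ w.2)) :
    (∀ x y, f₁ (star x y) = star (f₂ x) (f y)) ∧ (∀ x y, f₂ (star x y) = star (f x) (f₁ y)) := by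
  have hint : ∀ x w, α c (α (ι n x) w) = α (ι n (f x)) (α c w) := fun x w => by
    rw [← Module.End.mul_apply, ← map_mul, hf, map_mul, Module.End.mul_apply]
  exact ⟨fun x y => by simpa [hα, hblocks] using congrArg Prod.fst (hint y (0, x)),
    fun x y => by simpa [hα, hblocks] using congrArg Prod.snd (hint x (y, 0))⟩

end SymmetricComposition

theorem map_star_of_star_triality {star : S →ₗ[F] S →ₗ[F] S}
    (hnd : ∀ x : S, (∀ y : S, polar n x y = 0) → x = 0)
    (hassoc : ∀ x y z : S, polar n (star x y) z = polar n x (star y z))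
    {f f₁ f₂ : S →ₗ[F] S} (hf : Function.Surjective f)
    (hPf : ∀ x y, polar n (f x) (f y) = polar n x y)
    (hP₁ : ∀ x y, polar n (f₁ x) (f₁ y) = polar n x y)
    (htri : ∀ x y, f₁ (star x y) = star (f₂ x) (f y)) (x y : S) :
    f (star x y) = star (f₁ x) (f₂ y) := by
  refine eq_of_forall_polar_eq hnd fun z => ?_
  obtain ⟨z, rfl⟩ := hf z
  calc polar n (f (star x y)) (f z) = polar n (f₁ x) (f₁ (star y z)) := by
        rw [hPf, hassoc, hP₁]
    _ = polar n (star (f₁ x) (f₂ y)) (f z) := by rw [htri, hassoc]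

end QuadraticMap

theorem statement19_general (F : Type*) [Field F] (S : Type*) [AddCommGroup S] [Module F S]
    [FiniteDimensional F S]
    (n : QuadraticForm F S)
    (hnd : ∀ x : S, (∀ y : S, QuadraticMap.polar n x y = 0) → x = 0)
    (star : S →ₗ[F] S →ₗ[F] S)
    (hmul : ∀ x y : S, n (star x y) = n x * n y)
    (hassoc : ∀ x y z : S,
        QuadraticMap.polar n (star x y) z = QuadraticMap.polar n x (star y z))
    (α : CliffordAlgebra n →ₐ[F] Module.End F (S × S))
    (hα : ∀ (x : S) (w : S × S),
        α (CliffordAlgebra.ι n x) w = (star w.2 x, star x w.1))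
    (c : CliffordAlgebra n)
    (hcunit : IsUnit c)
    (hcσ : c * CliffordAlgebra.reverse c = 1)
    (f : S →ₗ[F] S)
    (hf : ∀ x : S, c * CliffordAlgebra.ι n x = CliffordAlgebra.ι n (f x) * c)
    (f₁ f₂ : Module.End F S)
    (hblocks : ∀ w : S × S, α c w = (f₁ w.1, f₂ w.2)) :
    (∀ x : S, n (f x) = n x) ∧ Function.Bijective f ∧
    (∀ x : S, n (f₁ x) = n x) ∧ Function.Bijective f₁ ∧
    (∀ x : S, n (f₂ x) = n x) ∧ Function.Bijective f₂ ∧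
    (∀ x y : S, f (star x y) = star (f₁ x) (f₂ y)) ∧
    (∀ x y : S, f₁ (star x y) = star (f₂ x) (f y)) ∧
    (∀ x y : S, f₂ (star x y) = star (f x) (f₁ y)) := by
  have hσc : reverse c * c = 1 :=
    hcunit.mul_left_cancel (by rw [← mul_assoc, hcσ, one_mul, mul_one])
  have hnf : ∀ x, n (f x) = n x := fun x => apply_eq_of_mul_ι_eq_ι_mul α hcσ (hf x)
  have hPf := polar_map_map hnf
  have hfbij := bijective_of_polar_map_map hnd hPf
  obtain ⟨hP₁, hP₂⟩ := polar_map_map_of_blocks (polar_prod_α_apply_α_apply hassoc hα hσc) hblocks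
  obtain ⟨htri₁, htri₂⟩ := star_triality_of_blocks hα hf hblocks
  have htri := map_star_of_star_triality hnd hassoc hfbij.2 hPf hP₁ htri₁
  obtain ⟨hnf₁, hnf₂⟩ := apply_map_eq_of_mul_apply_map_eq hnd hP₂ fun x y => by
    rw [← hmul, ← htri, hnf, hmul]
  exact ⟨hnf, hfbij, hnf₁, bijective_of_polar_map_map hnd hP₁, hnf₂,
    bijective_of_polar_map_map hnd hP₂, htri, htri₁, htri₂⟩

/-- Let `⋆` be a normalized symmetric composition on `(S,n)` and
`α_⋆ : C(S,n) → End_F(S ⊕ S)` the induced algebra map. If `c` is an invertible even Clifford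
element with `c·σ(c) = 1` (where `σ` is the reversal) normalizing `ι(S)`, with induced
conjugation `f` on `S` and diagonal blocks `f₁, f₂` of `α_⋆(c)`, then `f, f₁, f₂` are
isometries satisfying the three triality relations. -/
theorem statement19 (F : Type*) [Field F] (S : Type*) [AddCommGroup S] [Module F S]
    [FiniteDimensional F S] (hdim : Module.finrank F S = 8)
    (n : QuadraticForm F S)
    (hnd : ∀ x : S, (∀ y : S, QuadraticMap.polar n x y = 0) → x = 0)
    (star : S →ₗ[F] S →ₗ[F] S)
    (hmul : ∀ x y : S, n (star x y) = n x * n y)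
    (hassoc : ∀ x y z : S,
        QuadraticMap.polar n (star x y) z = QuadraticMap.polar n x (star y z))
    (α : CliffordAlgebra n →ₐ[F] Module.End F (S × S))
    (hα : ∀ (x : S) (w : S × S),
        α (CliffordAlgebra.ι n x) w = (star w.2 x, star x w.1))
    (c : CliffordAlgebra n) (hceven : c ∈ CliffordAlgebra.even n)
    (hcunit : IsUnit c)
    (hcσ : c * CliffordAlgebra.reverse c = 1)
    (f : S →ₗ[F] S)
    (hf : ∀ x : S, c * CliffordAlgebra.ι n x = CliffordAlgebra.ι n (f x) * c)
    (f₁ f₂ : Module.End F S)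
    (hblocks : ∀ w : S × S, α c w = (f₁ w.1, f₂ w.2)) :
    (∀ x : S, n (f x) = n x) ∧ Function.Bijective f ∧
    (∀ x : S, n (f₁ x) = n x) ∧ Function.Bijective f₁ ∧
    (∀ x : S, n (f₂ x) = n x) ∧ Function.Bijective f₂ ∧
    (∀ x y : S, f (star x y) = star (f₁ x) (f₂ y)) ∧
    (∀ x y : S, f₁ (star x y) = star (f₂ x) (f y)) ∧
    (∀ x y : S, f₂ (star x y) = star (f x) (f₁ y)) :=
  statement19_general F S n hnd star hmul hassoc α hα c hcunit hcσ f hf f₁ f₂ hblocks
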